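/- In any algebra (S,*,') satisfying the three axioms, the identity x' * x'' = x' * x holds for all x in S. -/

import Mathlib

/-! Reassociating `(x * x') * x = x` with (E3) gives `x * (x' * x'') = x`. Applied to `x''`, this
lets us expand `x' * x''` to `x' * (x'' * (x''' * x''''))`, which two more uses of (E3) collapse
to `x' * x`. -/

section

variable {S : Type*} {m : S → S → S} {i : S → S}

theorem mul_mul_inv_mul_inv_inv (E1 : ∀ x, m (m x (i x)) x = x)
    (E3 : ∀ x y z, m (m x y) z = m x (m y (i (i z)))) (x : S) :
    m x (m (i x) (i (i x))) = x := by
  rw [← E3, E1]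

theorem mul_inv_mul_inv_inv_mul (E1 : ∀ x, m (m x (i x)) x = x)
    (E3 : ∀ x y z, m (m x y) z = m x (m y (i (i z)))) (x z : S) :
    m x (m (i x) (m (i (i x)) (i (i (i (i z)))))) = m x z := by
  rw [← E3, ← E3, mul_mul_inv_mul_inv_inv E1 E3]

end

theorem stmt_general (S : Type*) (m : S → S → S) (i : S → S)
    (E1 : ∀ x, m (m x (i x)) x = x)
    (E3 : ∀ x y z, m (m x y) z = m x (m y (i (i z)))) :
    ∀ x, m (i x) (i (i x)) = m (i x) x := by
  intro x
  calc m (i x) (i (i x))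
      = m (i x) (m (i (i x)) (m (i (i (i x))) (i (i (i (i x)))))) := by
        rw [mul_mul_inv_mul_inv_inv E1 E3]
    _ = m (i x) x := mul_inv_mul_inv_inv_mul E1 E3 (i x) x

theorem stmt (S : Type*) (m : S → S → S) (i : S → S)
    (E1 : ∀ x, m (m x (i x)) x = x)
    (E2 : ∀ x y, m (m x (i x)) (m (i y) y) = m (m (i y) y) (m x (i x)))
    (E3 : ∀ x y z, m (m x y) z = m x (m y (i (i z)))) :
    ∀ x, m (i x) (i (i x)) = m (i x) x :=
  stmt_general S m i E1 E3
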